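/- arXiv:1009.6227 — 2 statements merged into one kernel-verified Lean document; each statement's English description precedes it below -/
import Mathlib

section
/- There is an absolute constant C such that for all Schwartz functions u on ℝ², the Gagliardo–Nirenberg inequality ‖u‖_{L^∞(ℝ²)} ≤ C ‖u‖_{L²(ℝ²)}^{1/3} ‖∇u‖_{L⁴(ℝ²)}^{2/3} holds. -/
/-!
Morrey's argument. Averaging over the ball `B = B(x, r)`,
`|u x| |B| ≤ ∫_B |u z - u x| dz + ∫_B |u|`. Writing `u z - u x` as an integral of `∇u` along the
segment `[x, z]` and rescaling the ball by the factor `t`, the first term is at most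
`∫₀¹ t^(-d/p) dt · r ‖∇u‖_p |B|^(1 - 1/p)`, finite because `p > d`; by Hölder the second is at most
`‖u‖_q |B|^(1 - 1/q)`. Since `|B| ∝ r^d`, this gives
`|u x| ≤ c₁ r^(1 - d/p) ‖∇u‖_p + c₂ r^(-d/q) ‖u‖_q` for every `r > 0`, and optimizing in `r` yields
the interpolation exponents, which are `1/3` and `2/3` for `d = 2`, `p = 4`, `q = 2`.
-/

open MeasureTheory Real Filter Set Metric Module Topology
open scoped ENNReal NNReal

section MeasureSpace

variable {α G : Type*} [MeasurableSpace α] [NormedAddCommGroup G]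

theorem setLIntegral_enorm_le_eLpNorm_mul_measure_rpow {μ : Measure α} {g : α → G}
    (hg : AEStronglyMeasurable g μ) {p : ℝ≥0∞} (hp : 1 ≤ p) (s : Set α) :
    ∫⁻ z in s, ‖g z‖ₑ ∂μ ≤ eLpNorm g p μ * μ s ^ (1 - p.toReal⁻¹) := by
  rw [← eLpNorm_one_eq_lintegral_enorm]
  refine (eLpNorm_le_eLpNorm_mul_rpow_measure_univ hp hg.restrict).trans ?_
  rw [Measure.restrict_apply_univ, ENNReal.toReal_one, div_one, one_div]
  gcongr
  exact Measure.restrict_le_self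

theorem enorm_mul_measure_le_setLIntegral_add {μ : Measure α} {g : α → G}
    (hg : AEStronglyMeasurable g μ) (s : Set α) (x : α) :
    ‖g x‖ₑ * μ s ≤ ∫⁻ z in s, ‖g z - g x‖ₑ ∂μ + ∫⁻ z in s, ‖g z‖ₑ ∂μ := by
  rw [← setLIntegral_const, ← lintegral_add_right' _ hg.restrict.enorm]
  refine lintegral_mono fun z ↦ ?_
  calc ‖g x‖ₑ = ‖g z - (g z - g x)‖ₑ := by rw [sub_sub_cancel]
    _ ≤ ‖g z‖ₑ + ‖g z - g x‖ₑ := enorm_sub_le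
    _ = ‖g z - g x‖ₑ + ‖g z‖ₑ := add_comm _ _

end MeasureSpace

theorem lintegral_Ioc_rpow_neg {a : ℝ} (ha : a < 1) :
    ∫⁻ t in Ioc (0 : ℝ) 1, ENNReal.ofReal (t ^ (-a)) = ENNReal.ofReal (1 - a)⁻¹ := by
  have hint : IntegrableOn (fun t : ℝ ↦ t ^ (-a)) (Ioc 0 1) :=
    (intervalIntegral.intervalIntegrable_rpow' (by linarith)).1
  rw [← ofReal_integral_eq_lintegral_ofReal hint
    ((ae_restrict_iff' measurableSet_Ioc).2 (.of_forall fun t ht ↦ rpow_nonneg ht.1.le _)),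
    ← intervalIntegral.integral_of_le zero_le_one, integral_rpow (.inl (by linarith))]
  congr 1
  rw [one_rpow, zero_rpow (by linarith)]
  field_simp
  ring

variable {E F : Type*} [NormedAddCommGroup E] [NormedSpace ℝ E]
  [NormedAddCommGroup F] [NormedSpace ℝ F] [CompleteSpace F]

theorem enorm_sub_le_lintegral_enorm_fderiv_segment {f : E → F} (hf : ContDiff ℝ 1 f)
    (x z : E) :
    ‖f z - f x‖ₑ ≤ ∫⁻ t in Ioc (0 : ℝ) 1, ‖fderiv ℝ f (x + t • (z - x))‖ₑ * ‖z - x‖ₑ := by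
  have hderiv : ∀ t ∈ uIcc (0 : ℝ) 1, HasDerivAt (fun s : ℝ ↦ f (x + s • (z - x)))
      (fderiv ℝ f (x + t • (z - x)) (z - x)) t := fun t _ ↦
    (hf.differentiable one_ne_zero _).hasFDerivAt.comp_hasDerivAt t
      (((hasDerivAt_id t).smul_const (z - x)).const_add x |>.congr_deriv (one_smul ℝ _))
  have hcont : Continuous fun t : ℝ ↦ fderiv ℝ f (x + t • (z - x)) (z - x) :=
    ((hf.continuous_fderiv one_ne_zero).comp (by fun_prop)).clm_apply continuous_const
  have ftc := intervalIntegral.integral_eq_sub_of_hasDerivAt hderiv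
    (hcont.intervalIntegrable 0 1)
  simp only [zero_smul, add_zero, one_smul, add_sub_cancel] at ftc
  rw [← ftc, intervalIntegral.integral_of_le zero_le_one]
  exact (enorm_integral_le_lintegral_enorm _).trans
    (lintegral_mono fun t ↦ ContinuousLinearMap.le_opENorm _ _)

variable [FiniteDimensional ℝ E] [MeasurableSpace E] [BorelSpace E]

theorem map_homothety_addHaar (μ : Measure E) [μ.IsAddHaarMeasure] (x : E) {t : ℝ}
    (ht : t ≠ 0) :
    μ.map (fun z ↦ x + t • (z - x)) = ENNReal.ofReal |t ^ finrank ℝ E|⁻¹ • μ := by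
  have hφ : (fun z : E ↦ x + t • (z - x)) = (· + (x - t • x)) ∘ (t • ·) := by
    ext z; simp only [Function.comp_apply, smul_sub]; abel
  rw [hφ, ← Measure.map_map (measurable_add_const _) (measurable_const_smul t),
    Measure.map_addHaar_smul μ ht, Measure.map_smul, map_add_right_eq_self, abs_inv]

theorem eLpNorm_comp_homothety {G : Type*} [NormedAddCommGroup G] (μ : Measure E)
    [μ.IsAddHaarMeasure] {g : E → G} (hg : AEStronglyMeasurable g μ) (x : E) {t : ℝ}
    (ht : t ≠ 0) {p : ℝ≥0∞} (hp : p ≠ ∞) :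
    eLpNorm (fun z ↦ g (x + t • (z - x))) p μ =
      ENNReal.ofReal (|t| ^ (-(finrank ℝ E / p.toReal))) * eLpNorm g p μ := by
  have hmeas : Measurable fun z : E ↦ x + t • (z - x) := by fun_prop
  rw [← Function.comp_def, ← eLpNorm_map_measure _ hmeas.aemeasurable,
    map_homothety_addHaar μ x ht, eLpNorm_smul_measure_of_ne_top hp, smul_eq_mul]
  · congr 1
    rw [ENNReal.ofReal_rpow_of_nonneg (by positivity) (by positivity), abs_pow, ← rpow_natCast,
      ← rpow_neg_one, ← rpow_mul (abs_nonneg t), ← rpow_mul (abs_nonneg t), one_div,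
      ENNReal.toReal_inv]
    ring_nf
  · rw [map_homothety_addHaar μ x ht]
    exact hg.smul_measure _

theorem setLIntegral_ball_enorm_sub_le (μ : Measure E) [μ.IsAddHaarMeasure] {f : E → F}
    (hf : ContDiff ℝ 1 f) {p : ℝ≥0} (hp₁ : 1 ≤ p) (hp : finrank ℝ E < p) (x : E) (r : ℝ) :
    ∫⁻ z in ball x r, ‖f z - f x‖ₑ ∂μ ≤
      ENNReal.ofReal (1 - finrank ℝ E / p)⁻¹ * ENNReal.ofReal r *
        eLpNorm (fderiv ℝ f) p μ * μ (ball x r) ^ (1 - (p : ℝ)⁻¹) := by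
  set B := ball x r
  set K := eLpNorm (fderiv ℝ f) p μ * μ B ^ (1 - (p : ℝ)⁻¹)
  have hDf : Continuous (fderiv ℝ f) := hf.continuous_fderiv one_ne_zero
  have hslice_cont (t : ℝ) : Continuous fun z ↦ fderiv ℝ f (x + t • (z - x)) := by fun_prop
  have hradius : ∀ z ∈ B, ‖z - x‖ₑ ≤ ENNReal.ofReal r := fun z hz ↦ by
    rw [← ofReal_norm, ← dist_eq_norm]
    exact ENNReal.ofReal_le_ofReal (mem_ball.1 hz).le
  have hslice : ∀ t ∈ Ioc (0 : ℝ) 1, ∫⁻ z in B, ‖fderiv ℝ f (x + t • (z - x))‖ₑ ∂μ ≤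
      ENNReal.ofReal (t ^ (-(finrank ℝ E / p : ℝ))) * K := fun t ht ↦ by
    have := setLIntegral_enorm_le_eLpNorm_mul_measure_rpow (μ := μ) (p := p)
      (hslice_cont t).aestronglyMeasurable (by exact_mod_cast hp₁) B
    rwa [eLpNorm_comp_homothety μ hDf.aestronglyMeasurable x ht.1.ne' ENNReal.coe_ne_top,
      abs_of_pos ht.1, ENNReal.coe_toReal, mul_assoc] at this
  have hmeas : Measurable fun q : E × ℝ ↦ ‖fderiv ℝ f (x + q.2 • (q.1 - x))‖ₑ :=
    (hDf.comp (by fun_prop)).enorm.measurable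
  calc ∫⁻ z in B, ‖f z - f x‖ₑ ∂μ
      ≤ ∫⁻ z in B, (∫⁻ t in Ioc (0 : ℝ) 1,
          ‖fderiv ℝ f (x + t • (z - x))‖ₑ * ENNReal.ofReal r) ∂μ :=
        setLIntegral_mono' measurableSet_ball fun z hz ↦
          (enorm_sub_le_lintegral_enorm_fderiv_segment hf x z).trans
            (lintegral_mono fun t ↦ by gcongr; exact hradius z hz)
    _ = ∫⁻ t in Ioc (0 : ℝ) 1,
          (∫⁻ z in B, ‖fderiv ℝ f (x + t • (z - x))‖ₑ ∂μ) * ENNReal.ofReal r := by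
        rw [lintegral_lintegral_swap ((hmeas.mul_const _).aemeasurable)]
        congr 1 with t
        exact lintegral_mul_const _ (hslice_cont t).enorm.measurable
    _ ≤ ∫⁻ t in Ioc (0 : ℝ) 1,
          ENNReal.ofReal (t ^ (-(finrank ℝ E / p : ℝ))) * (K * ENNReal.ofReal r) :=
        setLIntegral_mono (by fun_prop) fun t ht ↦ by
          rw [← mul_assoc]
          gcongr
          exact hslice t ht
    _ = _ := by
        rw [lintegral_mul_const _ (by fun_prop), lintegral_Ioc_rpow_neg]
        · ring
        · rw [div_lt_one (by positivity)]
          exact_mod_cast hp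

theorem enorm_mul_measure_ball_le (μ : Measure E) [μ.IsAddHaarMeasure] {f : E → F}
    (hf : ContDiff ℝ 1 f) {p q : ℝ≥0} (hp₁ : 1 ≤ p) (hp : finrank ℝ E < p) (hq : 1 ≤ q)
    (x : E) (r : ℝ) :
    ‖f x‖ₑ * μ (ball x r) ≤
      ENNReal.ofReal (1 - finrank ℝ E / p)⁻¹ * ENNReal.ofReal r *
          eLpNorm (fderiv ℝ f) p μ * μ (ball x r) ^ (1 - (p : ℝ)⁻¹) +
        eLpNorm f q μ * μ (ball x r) ^ (1 - (q : ℝ)⁻¹) := by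
  have hq' := setLIntegral_enorm_le_eLpNorm_mul_measure_rpow (μ := μ)
    hf.continuous.aestronglyMeasurable (p := q) (by exact_mod_cast hq) (ball x r)
  rw [ENNReal.coe_toReal] at hq'
  exact (enorm_mul_measure_le_setLIntegral_add hf.continuous.aestronglyMeasurable _ x).trans
    (add_le_add (setLIntegral_ball_enorm_sub_le μ hf hp₁ hp x r) hq')

theorem exists_norm_le_mul_rpow_add_mul_rpow [Nontrivial E] (μ : Measure E) [μ.IsAddHaarMeasure]
    {p q : ℝ≥0} (hp : finrank ℝ E < p) (hq : 1 ≤ q) :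
    ∃ c₁ > 0, ∃ c₂ > 0, ∀ f : E → F, ContDiff ℝ 1 f → eLpNorm f q μ ≠ ∞ →
      eLpNorm (fderiv ℝ f) p μ ≠ ∞ → ∀ x, ∀ r > 0,
        ‖f x‖ ≤ c₁ * (eLpNorm (fderiv ℝ f) p μ).toReal * r ^ (1 - finrank ℝ E / p : ℝ) +
          c₂ * (eLpNorm f q μ).toReal * r ^ (-(finrank ℝ E / q : ℝ)) := by
  have hp₁ : 1 ≤ p := (by exact_mod_cast finrank_pos : (1 : ℝ≥0) ≤ finrank ℝ E).trans hp.le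
  have hdp : 0 < 1 - finrank ℝ E / (p : ℝ) := by
    rw [sub_pos, div_lt_one (by exact_mod_cast zero_lt_one.trans_le hp₁)]
    exact_mod_cast hp
  have hv : 0 < (μ (ball 0 1)).toReal :=
    ENNReal.toReal_pos (measure_ball_pos μ 0 one_pos).ne' measure_ball_lt_top.ne
  refine ⟨(1 - finrank ℝ E / (p : ℝ))⁻¹ * (μ (ball 0 1)).toReal ^ (-(p : ℝ)⁻¹), by positivity,
    (μ (ball 0 1)).toReal ^ (-(q : ℝ)⁻¹), by positivity, fun f hf hfq hfp x r hr ↦ ?_⟩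
  have hV : (μ (ball x r)).toReal = (μ (ball 0 1)).toReal * r ^ finrank ℝ E := by
    rw [Measure.addHaar_ball μ x hr.le, ENNReal.toReal_mul, ENNReal.toReal_ofReal (by positivity),
      mul_comm]
  have hVpos : 0 < (μ (ball x r)).toReal := by rw [hV]; positivity
  have hVpow (s : ℝ) : (μ (ball x r)).toReal ^ (1 - s⁻¹) =
      (μ (ball 0 1)).toReal ^ (-s⁻¹) * r ^ (-(finrank ℝ E / s)) * (μ (ball x r)).toReal := by
    rw [sub_eq_add_neg, rpow_add hVpos, rpow_one, hV, mul_rpow hv.le (by positivity),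
      ← rpow_natCast, ← rpow_mul hr.le]
    ring_nf
  have hball_fin (s : ℝ≥0) (hs : 1 ≤ s) : μ (ball x r) ^ (1 - (s : ℝ)⁻¹) ≠ ∞ :=
    ENNReal.rpow_ne_top_of_nonneg (sub_nonneg.2 (inv_le_one_of_one_le₀ (by exact_mod_cast hs)))
      measure_ball_lt_top.ne
  have hp_fin := hball_fin p hp₁
  have hq_fin := hball_fin q hq
  have hball := ENNReal.toReal_mono (by finiteness) (enorm_mul_measure_ball_le μ hf hp₁ hp hq x r)
  rw [ENNReal.toReal_add (by finiteness) (by finiteness)] at hball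
  simp only [ENNReal.toReal_mul, ← ENNReal.toReal_rpow, toReal_enorm,
    ENNReal.toReal_ofReal hr.le, ENNReal.toReal_ofReal (inv_nonneg.2 hdp.le)] at hball
  refine le_of_mul_le_mul_right (hball.trans_eq ?_) hVpos
  rw [hVpow, hVpow, sub_eq_add_neg (1 : ℝ), rpow_add hr, rpow_one]
  ring

theorem le_two_mul_rpow_mul_rpow_of_forall_le {y a b α β : ℝ} (ha : 0 ≤ a) (hb : 0 ≤ b)
    (hα : 0 < α) (hβ : 0 < β) (h : ∀ r > 0, y ≤ a * r ^ α + b * r ^ (-β)) :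
    y ≤ 2 * a ^ (β / (α + β)) * b ^ (α / (α + β)) := by
  have hs : 0 < α + β := by linarith
  rcases ha.eq_or_lt with rfl | ha
  · have hlim : Tendsto (fun r : ℝ ↦ 0 * r ^ α + b * r ^ (-β)) atTop (𝓝 0) := by
      simpa using (tendsto_rpow_neg_atTop hβ).const_mul b
    have := ge_of_tendsto hlim (eventually_gt_atTop 0 |>.mono h)
    simpa [zero_rpow (div_pos hβ hs).ne'] using this
  rcases hb.eq_or_lt with rfl | hb
  · have hlim : Tendsto (fun r : ℝ ↦ a * r ^ α + 0 * r ^ (-β)) (𝓝[>] 0) (𝓝 0) := by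
      have : Tendsto (fun r : ℝ ↦ a * r ^ α) (𝓝[>] 0) (𝓝 (a * 0 ^ α)) :=
        ((continuousAt_id.rpow_const (.inr hα.le)).tendsto.const_mul a).mono_left
          nhdsWithin_le_nhds
      simpa [zero_rpow hα.ne'] using this
    have := ge_of_tendsto hlim (eventually_mem_nhdsWithin.mono h)
    simpa [zero_rpow (div_pos hα hs).ne'] using this
  -- the two terms balance at `r = (b / a) ^ (α + β)⁻¹`
  have hα' : α / (α + β) = 1 - β / (α + β) := by field_simp; ring
  have hβ' : β / (α + β) = 1 - α / (α + β) := by field_simp; ring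
  have e₁ : a * ((b / a) ^ (α + β)⁻¹) ^ α = a ^ (β / (α + β)) * b ^ (α / (α + β)) := by
    rw [← rpow_mul (by positivity), inv_mul_eq_div, div_rpow hb.le ha.le, hβ', rpow_sub ha,
      rpow_one]
    field_simp
  have e₂ : b * ((b / a) ^ (α + β)⁻¹) ^ (-β) = a ^ (β / (α + β)) * b ^ (α / (α + β)) := by
    rw [← rpow_mul (by positivity), inv_mul_eq_div, neg_div, rpow_neg (by positivity),
      div_rpow hb.le ha.le, hα', rpow_sub hb, rpow_one]
    field_simp
  calc y ≤ _ := h ((b / a) ^ (α + β)⁻¹) (by positivity)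
    _ = _ := by rw [e₁, e₂]; ring

theorem exists_eLpNorm_top_le_mul_rpow_mul_rpow [Nontrivial E] (μ : Measure E)
    [μ.IsAddHaarMeasure] {p q : ℝ≥0} (hp : finrank ℝ E < p) (hq : 1 ≤ q) :
    ∃ C > 0, ∀ f : E → F, ContDiff ℝ 1 f → eLpNorm f q μ ≠ ∞ → eLpNorm (fderiv ℝ f) p μ ≠ ∞ →
      (eLpNorm f ∞ μ).toReal ≤
        C * (eLpNorm f q μ).toReal ^
            ((1 - finrank ℝ E / p : ℝ) / (1 - finrank ℝ E / p + finrank ℝ E / q)) *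
          (eLpNorm (fderiv ℝ f) p μ).toReal ^
            ((finrank ℝ E / q : ℝ) / (1 - finrank ℝ E / p + finrank ℝ E / q)) := by
  obtain ⟨c₁, hc₁, c₂, hc₂, hbound⟩ := exists_norm_le_mul_rpow_add_mul_rpow (F := F) μ hp hq
  set α : ℝ := 1 - finrank ℝ E / p
  set β : ℝ := finrank ℝ E / q
  have hα : 0 < α := by
    rw [sub_pos, div_lt_one (by exact_mod_cast (Nat.cast_nonneg _).trans_lt hp)]
    exact_mod_cast hp
  have hβ : 0 < β :=
    div_pos (by exact_mod_cast finrank_pos) (by exact_mod_cast one_pos.trans_le hq)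
  refine ⟨2 * c₁ ^ (β / (α + β)) * c₂ ^ (α / (α + β)), by positivity,
    fun f hf hfq hfp ↦ ?_⟩
  have hpt (x : E) : ‖f x‖ ≤ 2 * c₁ ^ (β / (α + β)) * c₂ ^ (α / (α + β)) *
      (eLpNorm f q μ).toReal ^ (α / (α + β)) *
        (eLpNorm (fderiv ℝ f) p μ).toReal ^ (β / (α + β)) := by
    refine (le_two_mul_rpow_mul_rpow_of_forall_le (by positivity) (by positivity) hα hβ
      (hbound f hf hfq hfp x)).trans_eq ?_
    rw [mul_rpow hc₁.le ENNReal.toReal_nonneg, mul_rpow hc₂.le ENNReal.toReal_nonneg]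
    ring
  rw [eLpNorm_exponent_top]
  exact ENNReal.toReal_le_of_le_ofReal (by positivity)
    (eLpNormEssSup_le_of_ae_bound (.of_forall hpt))

/-- Gagliardo–Nirenberg: `‖u‖_∞ ≤ C ‖u‖₂^{1/3} ‖∇u‖₄^{2/3}` on ℝ². -/
theorem gagliardo_nirenberg_inf_four :
    ∃ C : ℝ, 0 < C ∧ ∀ u : SchwartzMap (EuclideanSpace ℝ (Fin 2)) ℝ,
      (eLpNorm (⇑u) ⊤ volume).toReal ≤
        C * (eLpNorm (⇑u) 2 volume).toReal ^ ((1 : ℝ) / 3) *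
          (eLpNorm (fun x => fderiv ℝ (⇑u) x) 4 volume).toReal ^ ((2 : ℝ) / 3) := by
  have hd : finrank ℝ (EuclideanSpace ℝ (Fin 2)) = 2 := finrank_euclideanSpace_fin
  obtain ⟨C, hC, hGN⟩ := exists_eLpNorm_top_le_mul_rpow_mul_rpow (F := ℝ)
    (volume : Measure (EuclideanSpace ℝ (Fin 2))) (p := 4) (q := 2)
    (by rw [hd]; norm_num) (by norm_num)
  refine ⟨C, hC, fun u ↦ ?_⟩
  have hDu : (fun x ↦ fderiv ℝ u x) = SchwartzMap.fderivCLM ℝ _ _ u := by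
    ext1 x; rw [SchwartzMap.fderivCLM_apply]
  have := hGN u (u.smooth 1) (u.memLp 2 volume).eLpNorm_ne_top
    (hDu ▸ (SchwartzMap.fderivCLM ℝ _ _ u).memLp 4 volume).eLpNorm_ne_top
  norm_num [hd] at this
  exact this
end

section
/- There is an absolute constant C such that for all Schwartz functions u on ℝ², the Ladyzhenskaya (Gagliardo–Nirenberg) inequality ‖u‖_{L⁴(ℝ²)} ≤ C ‖u‖_{L²(ℝ²)}^{1/2} ‖∇u‖_{L²(ℝ²)}^{1/2} holds. -/
open MeasureTheory Real Filter
open scoped ENNReal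

open Module Topology
open scoped NNReal

/-!
For compactly supported `C¹` functions `v` on a two-dimensional space, apply the
Gagliardo–Nirenberg–Sobolev inequality `‖w‖₂ ≤ K ‖Dw‖₁` to `w = v²`: since `Dw = 2 v Dv`,
Hölder's inequality gives `‖v‖₄² = ‖v²‖₂ ≤ 2K ‖v‖₂ ‖Dv‖₂`. A `C¹` function `u` with finite
`L²` norm is the pointwise limit of the truncations `χ(·/R) u`, whose `L²` norms are at most
`‖u‖₂` and whose derivatives have `L²` norm at most `‖Du‖₂ + O(1/R) ‖u‖₂`; lower
semicontinuity of the `L⁴` norm under pointwise convergence (Fatou) passes the inequality to `u`.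
-/

section Cutoff

variable {E : Type*} [NormedAddCommGroup E] [NormedSpace ℝ E] [FiniteDimensional ℝ E]

noncomputable def unitBump : ContDiffBump (0 : E) := ⟨1, 2, one_pos, one_lt_two⟩

noncomputable def cutoff (R : ℝ) (x : E) : ℝ := unitBump (E := E) (R⁻¹ • x)

theorem contDiff_cutoff {n : ℕ∞} (R : ℝ) : ContDiff ℝ n (cutoff (E := E) R) :=
  unitBump.contDiff.comp (contDiff_const_smul _)

theorem hasCompactSupport_cutoff {R : ℝ} (hR : R ≠ 0) : HasCompactSupport (cutoff (E := E) R) :=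
  unitBump.hasCompactSupport.comp_homeomorph (Homeomorph.smulOfNeZero _ (inv_ne_zero hR))

theorem abs_cutoff_le_one (R : ℝ) (x : E) : |cutoff R x| ≤ 1 := by
  rw [cutoff, abs_of_nonneg unitBump.nonneg]
  exact unitBump.le_one

theorem cutoff_eq_one {R : ℝ} (hR : 0 < R) {x : E} (hx : ‖x‖ ≤ R) : cutoff R x = 1 := by
  refine unitBump.one_of_mem_closedBall ?_
  rw [mem_closedBall_zero_iff, norm_smul, norm_inv, norm_of_nonneg hR.le]
  exact inv_mul_le_one_of_le₀ hx hR.le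

theorem tendsto_cutoff_atTop (x : E) : Tendsto (fun R => cutoff R x) atTop (𝓝 1) := by
  refine tendsto_const_nhds.congr' ?_
  filter_upwards [eventually_ge_atTop (‖x‖ + 1)] with R hR
  exact (cutoff_eq_one (by linarith [norm_nonneg x]) (by linarith)).symm

theorem exists_norm_fderiv_cutoff_le :
    ∃ M, ∀ R > 0, ∀ x : E, ‖fderiv ℝ (cutoff R) x‖ ≤ M / R := by
  obtain ⟨M, hM⟩ := (unitBump (E := E)).hasCompactSupport.fderiv (𝕜 := ℝ)
    |>.exists_bound_of_continuous (unitBump.contDiff.continuous_fderiv one_ne_zero)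
  refine ⟨M, fun R hR x => ?_⟩
  have hchain : fderiv ℝ (cutoff R) x = R⁻¹ • fderiv ℝ (unitBump (E := E)) (R⁻¹ • x) := by
    have hbump := (unitBump (E := E)).contDiffAt (n := 1) (x := R⁻¹ • x)
      |>.differentiableAt one_ne_zero
    rw [show cutoff R = unitBump (E := E) ∘ HSMul.hSMul R⁻¹ from rfl,
      (hbump.hasFDerivAt.comp x ((hasFDerivAt_id x).const_smul R⁻¹)).fderiv,
      ContinuousLinearMap.comp_smul, ContinuousLinearMap.comp_id]
  rw [hchain, norm_smul, norm_inv, norm_of_nonneg hR.le, inv_mul_eq_div]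
  exact div_le_div_of_nonneg_right (hM _) hR.le

variable [MeasurableSpace E] {μ : Measure E} {u : E → ℝ}

theorem eLpNorm_cutoff_mul_le (R : ℝ) (p : ℝ≥0∞) :
    eLpNorm (fun x => cutoff R x * u x) p μ ≤ eLpNorm u p μ :=
  eLpNorm_mono fun x => by
    rw [norm_mul, Real.norm_eq_abs (cutoff R x)]
    exact mul_le_of_le_one_left (norm_nonneg _) (abs_cutoff_le_one R x)

variable [OpensMeasurableSpace E]

theorem eLpNorm_fderiv_cutoff_mul_le (hu : ContDiff ℝ 1 u) {p : ℝ≥0∞} (hp : 1 ≤ p) {R c : ℝ}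
    (hR : ∀ x : E, ‖fderiv ℝ (cutoff R) x‖ ≤ c) :
    eLpNorm (fderiv ℝ fun x => cutoff R x * u x) p μ ≤
      eLpNorm (fderiv ℝ u) p μ + ENNReal.ofReal c * eLpNorm u p μ := by
  have hχ : ContDiff ℝ 1 (cutoff (E := E) R) := contDiff_cutoff (n := 1) R
  have hleibniz : (fderiv ℝ fun x => cutoff R x * u x) =
      (fun x => cutoff R x • fderiv ℝ u x) + fun x => u x • fderiv ℝ (cutoff R) x := by
    funext x
    exact fderiv_fun_mul (hχ.differentiable one_ne_zero x) (hu.differentiable one_ne_zero x)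
  have hA : AEStronglyMeasurable (fun x => cutoff R x • fderiv ℝ u x) μ :=
    (hχ.continuous.smul (hu.continuous_fderiv one_ne_zero)).aestronglyMeasurable
  have hB : AEStronglyMeasurable (fun x => u x • fderiv ℝ (cutoff R) x) μ :=
    (hu.continuous.smul (hχ.continuous_fderiv one_ne_zero)).aestronglyMeasurable
  rw [hleibniz]
  refine (eLpNorm_add_le hA hB hp).trans (add_le_add ?_ ?_)
  · refine eLpNorm_mono fun x => ?_
    rw [norm_smul, Real.norm_eq_abs]
    exact mul_le_of_le_one_left (norm_nonneg _) (abs_cutoff_le_one R x)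
  · refine eLpNorm_le_mul_eLpNorm_of_ae_le_mul (ae_of_all _ fun x => ?_) p
    rw [norm_smul, mul_comm]
    exact mul_le_mul_of_nonneg_right (hR x) (norm_nonneg _)

end Cutoff

section GagliardoNirenberg

variable {E : Type*} [NormedAddCommGroup E] [NormedSpace ℝ E] [MeasurableSpace E] [BorelSpace E]
  [FiniteDimensional ℝ E]

theorem eLpNorm_mul_self {α : Type*} [MeasurableSpace α] {μ : Measure α} (v : α → ℝ) :
    eLpNorm (fun x => v x * v x) 2 μ = eLpNorm v 4 μ ^ (2 : ℝ) := by
  have hsq : (fun x => v x * v x) = fun x => ‖v x‖ ^ (2 : ℝ) := by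
    funext x
    rw [Real.rpow_two, Real.norm_eq_abs, sq_abs, sq]
  rw [hsq, eLpNorm_norm_rpow v two_pos]
  norm_num

theorem eLpNorm_fderiv_mul_self_le {μ : Measure E} {v : E → ℝ} (hv : ContDiff ℝ 1 v) :
    eLpNorm (fderiv ℝ fun x => v x * v x) 1 μ ≤
      2 * eLpNorm v 2 μ * eLpNorm (fderiv ℝ v) 2 μ := by
  have hdv : Differentiable ℝ v := hv.differentiable one_ne_zero
  have hfderiv : fderiv ℝ (fun x => v x * v x) = fun x => (2 * v x) • fderiv ℝ v x := by
    funext x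
    rw [fderiv_fun_mul (hdv x) (hdv x), ← add_smul, two_mul]
  rw [hfderiv]
  exact_mod_cast eLpNorm_le_eLpNorm_mul_eLpNorm'_of_norm (p := 2) (q := 2)
    hv.continuous.aestronglyMeasurable (hv.continuous_fderiv one_ne_zero).aestronglyMeasurable
    (fun a L => (2 * a) • L) 2 (ae_of_all _ fun x => by simp [norm_smul, mul_assoc])

variable (μ : Measure E) [μ.IsAddHaarMeasure]

noncomputable def ladyzhenskayaConst : ℝ≥0 := 2 * eLpNormLESNormFDerivOneConst μ 2

variable {μ}

theorem eLpNorm_four_sq_le_of_hasCompactSupport (hE : finrank ℝ E = 2) {v : E → ℝ}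
    (hv : ContDiff ℝ 1 v) (h2v : HasCompactSupport v) :
    eLpNorm v 4 μ ^ (2 : ℝ) ≤
      ladyzhenskayaConst μ * eLpNorm v 2 μ * eLpNorm (fderiv ℝ v) 2 μ := by
  have hconj : NNReal.HolderConjugate (finrank ℝ E) 2 := by
    rw [hE]
    exact_mod_cast NNReal.HolderConjugate.two_two
  calc eLpNorm v 4 μ ^ (2 : ℝ) = eLpNorm (fun x => v x * v x) 2 μ := (eLpNorm_mul_self v).symm
    _ ≤ eLpNormLESNormFDerivOneConst μ 2 * eLpNorm (fderiv ℝ fun x => v x * v x) 1 μ := by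
      exact_mod_cast eLpNorm_le_eLpNorm_fderiv_one μ (hv.mul hv) h2v.mul_left hconj
    _ ≤ eLpNormLESNormFDerivOneConst μ 2 * (2 * eLpNorm v 2 μ * eLpNorm (fderiv ℝ v) 2 μ) := by
      gcongr
      exact eLpNorm_fderiv_mul_self_le hv
    _ = ladyzhenskayaConst μ * eLpNorm v 2 μ * eLpNorm (fderiv ℝ v) 2 μ := by
      simp only [ladyzhenskayaConst, ENNReal.coe_mul]
      push_cast
      ring

theorem eLpNorm_four_le_of_contDiff (hE : finrank ℝ E = 2) {u : E → ℝ} (hu : ContDiff ℝ 1 u)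
    (hu2 : eLpNorm u 2 μ ≠ ∞) :
    eLpNorm u 4 μ ≤
      (ladyzhenskayaConst μ * eLpNorm u 2 μ * eLpNorm (fderiv ℝ u) 2 μ) ^ ((1 : ℝ) / 2) := by
  set K : ℝ≥0∞ := (ladyzhenskayaConst μ : ℝ≥0∞)
  set a := eLpNorm u 2 μ
  set b := eLpNorm (fderiv ℝ u) 2 μ
  obtain ⟨M, hM⟩ := exists_norm_fderiv_cutoff_le (E := E)
  set R : ℕ → ℝ := fun n => n + 1
  have hRpos (n : ℕ) : 0 < R n := by positivity
  have hR : Tendsto R atTop atTop := tendsto_atTop_add_const_right _ 1 tendsto_natCast_atTop_atTop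
  have hbound (n : ℕ) : eLpNorm (fun x => cutoff (R n) x * u x) 4 μ ≤
      (K * a * (b + ENNReal.ofReal (M / R n) * a)) ^ ((1 : ℝ) / 2) := by
    rw [one_div, ENNReal.le_rpow_inv_iff two_pos]
    calc _ ≤ K * eLpNorm (fun x => cutoff (R n) x * u x) 2 μ *
          eLpNorm (fderiv ℝ fun x => cutoff (R n) x * u x) 2 μ :=
          eLpNorm_four_sq_le_of_hasCompactSupport hE ((contDiff_cutoff (n := 1) _).mul hu)
            (hasCompactSupport_cutoff (hRpos n).ne').mul_right
      _ ≤ K * a * (b + ENNReal.ofReal (M / R n) * a) := by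
          gcongr
          · exact eLpNorm_cutoff_mul_le _ _
          · exact eLpNorm_fderiv_cutoff_mul_le hu one_le_two (hM _ (hRpos n))
  have hlim : Tendsto (fun n => (K * a * (b + ENNReal.ofReal (M / R n) * a)) ^ ((1 : ℝ) / 2))
      atTop (𝓝 ((K * a * b) ^ ((1 : ℝ) / 2))) := by
    have hε : Tendsto (fun n => ENNReal.ofReal (M / R n)) atTop (𝓝 0) := by
      simpa using ENNReal.tendsto_ofReal (tendsto_const_nhds.div_atTop hR)
    have hsum : Tendsto (fun n => b + ENNReal.ofReal (M / R n) * a) atTop (𝓝 b) := by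
      simpa using tendsto_const_nhds.add (ENNReal.Tendsto.mul_const hε (Or.inr hu2))
    exact (ENNReal.continuous_rpow_const.tendsto _).comp
      (ENNReal.Tendsto.const_mul hsum (Or.inr (ENNReal.mul_ne_top ENNReal.coe_ne_top hu2)))
  have hpointwise (x : E) : Tendsto (fun n => cutoff (R n) x * u x) atTop (𝓝 (u x)) := by
    simpa using ((tendsto_cutoff_atTop x).comp hR).mul_const (u x)
  calc eLpNorm u 4 μ ≤ atTop.liminf fun n => eLpNorm (fun x => cutoff (R n) x * u x) 4 μ :=
        Lp.eLpNorm_lim_le_liminf_eLpNorm (fun n =>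
            ((contDiff_cutoff (n := 0) _).continuous.mul hu.continuous).aestronglyMeasurable)
          u (ae_of_all _ hpointwise)
    _ ≤ atTop.liminf fun n => (K * a * (b + ENNReal.ofReal (M / R n) * a)) ^ ((1 : ℝ) / 2) :=
        liminf_le_liminf (Eventually.of_forall hbound)
    _ = (K * a * b) ^ ((1 : ℝ) / 2) := hlim.liminf_eq

end GagliardoNirenberg

/-- Ladyzhenskaya inequality: `‖u‖₄ ≤ C ‖u‖₂^{1/2} ‖∇u‖₂^{1/2}` on ℝ². -/
theorem ladyzhenskaya :
    ∃ C : ℝ, 0 < C ∧ ∀ u : SchwartzMap (EuclideanSpace ℝ (Fin 2)) ℝ,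
      (eLpNorm (⇑u) 4 volume).toReal ≤
        C * (eLpNorm (⇑u) 2 volume).toReal ^ ((1 : ℝ) / 2) *
          (eLpNorm (fun x => fderiv ℝ (⇑u) x) 2 volume).toReal ^ ((1 : ℝ) / 2) := by
  set K := ladyzhenskayaConst (volume : Measure (EuclideanSpace ℝ (Fin 2)))
  refine ⟨max ((K : ℝ) ^ ((1 : ℝ) / 2)) 1, by positivity, fun u => ?_⟩
  have ha : eLpNorm (⇑u) 2 volume ≠ ∞ := (u.memLp 2 volume).eLpNorm_ne_top
  have hb : eLpNorm (fderiv ℝ ⇑u) 2 volume ≠ ∞ :=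
    (SchwartzMap.fderivCLM ℝ _ ℝ u |>.memLp 2 volume).eLpNorm_ne_top
  have h := eLpNorm_four_le_of_contDiff finrank_euclideanSpace_fin (u.smooth 1) ha
  calc (eLpNorm (⇑u) 4 volume).toReal
      ≤ ((K * eLpNorm (⇑u) 2 volume * eLpNorm (fderiv ℝ ⇑u) 2 volume) ^ ((1 : ℝ) / 2)).toReal :=
        ENNReal.toReal_mono (by finiteness) h
    _ = (K : ℝ) ^ ((1 : ℝ) / 2) * (eLpNorm (⇑u) 2 volume).toReal ^ ((1 : ℝ) / 2) *
          (eLpNorm (fderiv ℝ ⇑u) 2 volume).toReal ^ ((1 : ℝ) / 2) := by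
        rw [← ENNReal.toReal_rpow, ENNReal.toReal_mul, ENNReal.toReal_mul,
          Real.mul_rpow (by positivity) (by positivity), Real.mul_rpow (by positivity) (by positivity)]
        rfl
    _ ≤ _ := by gcongr; exact le_max_left _ _
end
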